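/- Let V be a unitary n×n complex matrix and R an n×n complex matrix with conj R = R (R real-entried, e.g. a real diagonal matrix of squeezing eigenvalues). Then exp(fromBlocks 0 (V·R·Vᵀ) ((conj V)·R·Vᴴ) 0) = M · exp(fromBlocks 0 R R 0) · Mᴴ, where M = fromBlocks V 0 0 (conj V). In particular, if −iH_I = V·R·Vᵀ is a Takagi factorization of the squeezing matrix, then the first-order Magnus symplectic matrix S₁ = exp(fromBlocks 0 (−iH_I) (i·conj H_I) 0) admits the Bloch-Messiah reduction S₁ = M · exp(fromBlocks 0 R R 0) · Mᴴ with equal input and output passive transformations. -/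

import Mathlib

open Matrix

/-! Conjugating `fromBlocks 0 R R 0` by the block-diagonal unitary `M = fromBlocks V 0 0 (conj V)`
gives `fromBlocks 0 (V R Vᵀ) (conj V · R · Vᴴ) 0`, because `(conj V)ᴴ = Vᵀ`. Since `Mᴴ = M⁻¹`, the
matrix exponential commutes with this conjugation. -/

namespace Matrix

variable {m n α : Type*}

theorem conjTranspose_map_star [InvolutiveStar α] (A : Matrix m n α) : (A.map star)ᴴ = Aᵀ := by
  ext; simp

variable [Fintype m] [Fintype n]

theorem fromBlocks_diag_mul_fromBlocks_offDiag_mul_conjTranspose [Semiring α] [StarRing α]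
    (A : Matrix m m α) (D : Matrix n n α) (B : Matrix m n α) (C : Matrix n m α) :
    fromBlocks A 0 0 D * fromBlocks 0 B C 0 * (fromBlocks A 0 0 D)ᴴ =
      fromBlocks 0 (A * B * Dᴴ) (D * C * Aᴴ) 0 := by
  simp [fromBlocks_conjTranspose, fromBlocks_multiply]

variable [DecidableEq m] [DecidableEq n]

theorem fromBlocks_mem_unitaryGroup [CommRing α] [StarRing α] {A : Matrix m m α}
    {D : Matrix n n α} (hA : A ∈ unitaryGroup m α) (hD : D ∈ unitaryGroup n α) :
    fromBlocks A 0 0 D ∈ unitaryGroup (m ⊕ n) α := by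
  rw [mem_unitaryGroup_iff, star_eq_conjTranspose, fromBlocks_conjTranspose, fromBlocks_multiply]
  rw [mem_unitaryGroup_iff, star_eq_conjTranspose] at hA hD
  simp [hA, hD]

theorem exp_unitary_conj [NormedCommRing α] [StarRing α] [NormedAlgebra ℚ α] [CompleteSpace α]
    {U : Matrix m m α} (hU : U ∈ unitaryGroup m α) (A : Matrix m m α) :
    NormedSpace.exp (U * A * Uᴴ) = U * NormedSpace.exp A * Uᴴ :=
  exp_units_conj (Unitary.toUnits ⟨U, hU⟩) A

end Matrix

theorem first_order_magnus_bloch_messiah_general (n : ℕ)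
    (V : Matrix (Fin n) (Fin n) ℂ)
    (hV : V ∈ Matrix.unitaryGroup (Fin n) ℂ)
    (R : Matrix (Fin n) (Fin n) ℂ)
    (M : Matrix (Fin n ⊕ Fin n) (Fin n ⊕ Fin n) ℂ)
    (hM : M = Matrix.fromBlocks V 0 0 (V.map (starRingEnd ℂ))) :
    NormedSpace.exp
        (Matrix.fromBlocks 0 (V * R * Vᵀ) ((V.map (starRingEnd ℂ)) * R * Vᴴ) 0) =
      M * NormedSpace.exp (Matrix.fromBlocks 0 R R 0) * Mᴴ := by
  have hVbar : V.map star ∈ unitaryGroup (Fin n) ℂ := map_star_mem_unitaryGroup_iff.mpr hV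
  have hMV : M ∈ unitaryGroup (Fin n ⊕ Fin n) ℂ := hM ▸ fromBlocks_mem_unitaryGroup hV hVbar
  have hVbarH : (V.map (starRingEnd ℂ))ᴴ = Vᵀ := conjTranspose_map_star V
  have hconj : M * fromBlocks 0 R R 0 * Mᴴ =
      fromBlocks 0 (V * R * Vᵀ) (V.map (starRingEnd ℂ) * R * Vᴴ) 0 := by
    rw [hM, fromBlocks_diag_mul_fromBlocks_offDiag_mul_conjTranspose, hVbarH]
  rw [← hconj, exp_unitary_conj hMV]

/-- Bloch-Messiah reduction of the first-order Magnus symplectic matrix: if `V` is unitary and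
`conj R = R`, then `exp (fromBlocks 0 (V·R·Vᵀ) ((conj V)·R·Vᴴ) 0) =
M · exp (fromBlocks 0 R R 0) · Mᴴ` with `M = fromBlocks V 0 0 (conj V)`; in particular, for a
Takagi factorization `−iH_I = V·R·Vᵀ` the symplectic matrix `S₁` admits a Bloch-Messiah reduction
with equal input and output passive transformations. -/
theorem first_order_magnus_bloch_messiah (n : ℕ)
    (V : Matrix (Fin n) (Fin n) ℂ)
    (hV : V ∈ Matrix.unitaryGroup (Fin n) ℂ)
    (R : Matrix (Fin n) (Fin n) ℂ)
    (hR : R.map (starRingEnd ℂ) = R)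
    (M : Matrix (Fin n ⊕ Fin n) (Fin n ⊕ Fin n) ℂ)
    (hM : M = Matrix.fromBlocks V 0 0 (V.map (starRingEnd ℂ))) :
    NormedSpace.exp
        (Matrix.fromBlocks 0 (V * R * Vᵀ) ((V.map (starRingEnd ℂ)) * R * Vᴴ) 0) =
      M * NormedSpace.exp (Matrix.fromBlocks 0 R R 0) * Mᴴ :=
  first_order_magnus_bloch_messiah_general n V hV R M hM
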